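/- Let 0 < θ ≤ π/4, let a, b ∈ M_3(ℂ) be positive semidefinite with ⟨ψ_i, (a⊗b) ψ_i⟩ ≠ 0 for each of the nine states ψ_i of S_3(θ), and let δ be the disturbance of a⊗b on S_3(θ). Then for j ∈ {0,2}: |b_{11} − b_{jj}| ≤ (2/sin 2θ)·(δ·‖b‖_∞ + |Re b_{j1}|), and the same inequality holds with a in place of b. -/

import Mathlib

open Matrix Kronecker
open scoped ComplexOrder

/-- The disturbance `δ` of the product operator `a ⊗ b` on the family of states `ψ`. -/
noncomputable def disturbance {n dA dB : ℕ} (ψ : Fin n → Fin dA × Fin dB → ℂ)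
    (a : Matrix (Fin dA) (Fin dA) ℂ) (b : Matrix (Fin dB) (Fin dB) ℂ) : ℝ :=
  ⨆ p : {q : Fin n × Fin n // q.1 ≠ q.2},
    ‖star (ψ p.1.1) ⬝ᵥ (a ⊗ₖ b).mulVec (ψ p.1.2)‖ /
      Real.sqrt ((star (ψ p.1.1) ⬝ᵥ (a ⊗ₖ b).mulVec (ψ p.1.1)).re *
        (star (ψ p.1.2) ⬝ᵥ (a ⊗ₖ b).mulVec (ψ p.1.2)).re)

/-- The standard basis vector `|i⟩` of `ℂ³`. -/
noncomputable def e3 (i : Fin 3) : Fin 3 → ℂ := fun k => if k = i then 1 else 0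

/-- The product vector `α ⊗ β` in `ℂ³ ⊗ ℂ³`. -/
noncomputable def kp (α β : Fin 3 → ℂ) : Fin 3 × Fin 3 → ℂ := fun p => α p.1 * β p.2

/-- The nine rotated domino states `S₃(θ₁,θ₂,θ₃,θ₄)` in `ℂ³ ⊗ ℂ³`. -/
noncomputable def rotDomino (t1 t2 t3 t4 : ℝ) : Fin 9 → Fin 3 × Fin 3 → ℂ :=
  ![kp (e3 1) (e3 1),
    kp (e3 0) (fun k => (Real.cos t1 : ℂ) * e3 0 k + (Real.sin t1 : ℂ) * e3 1 k),
    kp (e3 0) (fun k => -(Real.sin t1 : ℂ) * e3 0 k + (Real.cos t1 : ℂ) * e3 1 k),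
    kp (e3 2) (fun k => (Real.cos t2 : ℂ) * e3 1 k + (Real.sin t2 : ℂ) * e3 2 k),
    kp (e3 2) (fun k => -(Real.sin t2 : ℂ) * e3 1 k + (Real.cos t2 : ℂ) * e3 2 k),
    kp (fun k => (Real.cos t3 : ℂ) * e3 1 k + (Real.sin t3 : ℂ) * e3 2 k) (e3 0),
    kp (fun k => -(Real.sin t3 : ℂ) * e3 1 k + (Real.cos t3 : ℂ) * e3 2 k) (e3 0),
    kp (fun k => (Real.cos t4 : ℂ) * e3 0 k + (Real.sin t4 : ℂ) * e3 1 k) (e3 2),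
    kp (fun k => -(Real.sin t4 : ℂ) * e3 0 k + (Real.cos t4 : ℂ) * e3 1 k) (e3 2)]

/-- The operator (spectral) norm of a square complex matrix. -/
noncomputable def opNorm {n : ℕ} (M : Matrix (Fin n) (Fin n) ℂ) : ℝ :=
  ‖Matrix.toEuclideanCLM (𝕜 := ℂ) M‖

/-! ### Auxiliary lemmas -/

/-- Rotated basis vector in the plane spanned by `e3 p` and `e3 q`. -/
noncomputable def rv (c s : ℝ) (p q : Fin 3) : Fin 3 → ℂ :=
  fun k => (c : ℂ) * e3 p k + (s : ℂ) * e3 q k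

lemma kp_dot (a b : Matrix (Fin 3) (Fin 3) ℂ) (α β γ δ : Fin 3 → ℂ) :
    star (kp α β) ⬝ᵥ (a ⊗ₖ b).mulVec (kp γ δ) =
      (star α ⬝ᵥ a.mulVec γ) * (star β ⬝ᵥ b.mulVec δ) := by
  simp only [dotProduct, mulVec, kp, Pi.star_apply, star_mul', kroneckerMap_apply,
    Fintype.sum_prod_type, Fin.sum_univ_three]
  ring

lemma re_le_norm (z : ℂ) : z.re ≤ ‖z‖ := by
  exact Complex.re_le_norm z

lemma quad_norm_le (M : Matrix (Fin 3) (Fin 3) ℂ) (v : Fin 3 → ℂ)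
    (hv : star v ⬝ᵥ v = 1) : ‖star v ⬝ᵥ M.mulVec v‖ ≤ opNorm M := by
  set x : EuclideanSpace ℂ (Fin 3) := (WithLp.equiv 2 _).symm v with hx
  have hxn : ‖x‖ = 1 := by
    have h2 : (‖x‖ : ℝ) ^ 2 = 1 := by
      have := inner_self_eq_norm_sq (𝕜 := ℂ) x
      rw [show (inner ℂ x x : ℂ) = star v ⬝ᵥ v from dotProduct_comm v (star v), hv] at this
      simpa using this.symm
    nlinarith [norm_nonneg x]
  have key : star v ⬝ᵥ M.mulVec v =
      inner (𝕜 := ℂ) x (Matrix.toEuclideanCLM (𝕜 := ℂ) M x) := by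
    rw [hx, WithLp.equiv_symm_apply, Matrix.toEuclideanCLM_toLp, EuclideanSpace.inner_toLp_toLp,
      dotProduct_comm]
  rw [key]
  calc ‖inner (𝕜 := ℂ) x (Matrix.toEuclideanCLM (𝕜 := ℂ) M x)‖
      ≤ ‖x‖ * ‖Matrix.toEuclideanCLM (𝕜 := ℂ) M x‖ := norm_inner_le_norm _ _
    _ ≤ ‖x‖ * (‖Matrix.toEuclideanCLM (𝕜 := ℂ) M‖ * ‖x‖) := by
        gcongr; exact ContinuousLinearMap.le_opNorm _ _
    _ = opNorm M := by rw [hxn, opNorm]; ring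

lemma rot01 (M : Matrix (Fin 3) (Fin 3) ℂ) (c s : ℝ) :
    star (rv c s 0 1) ⬝ᵥ M.mulVec (rv (-s) c 0 1) =
      -((c*s : ℝ) : ℂ) * M 0 0 + ((c^2 : ℝ) : ℂ) * M 0 1 - ((s^2 : ℝ):ℂ) * M 1 0
        + ((c*s : ℝ):ℂ) * M 1 1 := by
  simp [rv, dotProduct, mulVec, e3, Fin.sum_univ_three, Complex.star_def]
  ring

lemma rot12 (M : Matrix (Fin 3) (Fin 3) ℂ) (c s : ℝ) :
    star (rv c s 1 2) ⬝ᵥ M.mulVec (rv (-s) c 1 2) =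
      -((c*s : ℝ) : ℂ) * M 1 1 + ((c^2 : ℝ) : ℂ) * M 1 2 - ((s^2 : ℝ):ℂ) * M 2 1
        + ((c*s : ℝ):ℂ) * M 2 2 := by
  simp [rv, dotProduct, mulVec, e3, Fin.sum_univ_three, Complex.star_def]
  ring

lemma rv_unit (c s : ℝ) (h : c^2+s^2 = 1) (p q : Fin 3) (hpq : p ≠ q) :
    star (rv c s p q) ⬝ᵥ (rv c s p q) = 1 := by
  fin_cases p <;> fin_cases q <;> simp_all [rv, dotProduct, e3, Fin.sum_univ_three,
    Complex.star_def] <;> (norm_cast <;> linear_combination h)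

lemma chain {n : ℕ} (ψ : Fin n → Fin 3 × Fin 3 → ℂ)
    (a b : Matrix (Fin 3) (Fin 3) ℂ) (i1 i2 : Fin n) (h12 : i1 ≠ i2)
    (K X Q2 Q3 : ℂ) (N : ℝ)
    (hd1 : star (ψ i1) ⬝ᵥ (a ⊗ₖ b).mulVec (ψ i1) = K * Q2)
    (hd2 : star (ψ i2) ⬝ᵥ (a ⊗ₖ b).mulVec (ψ i2) = K * Q3)
    (hod : star (ψ i1) ⬝ᵥ (a ⊗ₖ b).mulVec (ψ i2) = K * X)
    (hnz1 : K * Q2 ≠ 0) (hnz2 : K * Q3 ≠ 0)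
    (hK : 0 ≤ K) (hQ2 : 0 ≤ Q2) (hQ3 : 0 ≤ Q3)
    (hQ2N : Q2.re ≤ N) (hQ3N : Q3.re ≤ N) :
    ‖X‖ ≤ disturbance ψ a b * N := by
  obtain ⟨hKre, hKim⟩ := Complex.nonneg_iff.1 hK
  obtain ⟨hQ2re, hQ2im⟩ := Complex.nonneg_iff.1 hQ2
  obtain ⟨hQ3re, hQ3im⟩ := Complex.nonneg_iff.1 hQ3
  have hKpos : 0 < K.re := by
    rcases lt_or_eq_of_le hKre with h | h
    · exact h
    · exact absurd (by apply Complex.ext <;> simp [← h, ← hKim]) (left_ne_zero_of_mul hnz1)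
  have hQ2pos : 0 < Q2.re := by
    rcases lt_or_eq_of_le hQ2re with h | h
    · exact h
    · exact absurd (by apply Complex.ext <;> simp [← h, ← hQ2im])
        (right_ne_zero_of_mul hnz1)
  have hQ3pos : 0 < Q3.re := by
    rcases lt_or_eq_of_le hQ3re with h | h
    · exact h
    · exact absurd (by apply Complex.ext <;> simp [← h, ← hQ3im])
        (right_ne_zero_of_mul hnz2)
  have e1 : (K * Q2).re = K.re * Q2.re := by
    rw [Complex.mul_re, ← hKim]; ring
  have e2 : (K * Q3).re = K.re * Q3.re := by
    rw [Complex.mul_re, ← hKim]; ring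
  have eKX : ‖K * X‖ = K.re * ‖X‖ := by
    have hKc : K = ((K.re : ℝ) : ℂ) := by apply Complex.ext <;> simp [← hKim]
    have hnK : ‖K‖ = K.re := by
      nth_rewrite 1 [hKc]
      rw [Complex.norm_real, Real.norm_of_nonneg hKre]
    rw [norm_mul, hnK]
  have hsup0 := le_ciSup (f := fun p : {q : Fin n × Fin n // q.1 ≠ q.2} =>
      ‖star (ψ p.1.1) ⬝ᵥ (a ⊗ₖ b).mulVec (ψ p.1.2)‖ /
        Real.sqrt ((star (ψ p.1.1) ⬝ᵥ (a ⊗ₖ b).mulVec (ψ p.1.1)).re *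
          (star (ψ p.1.2) ⬝ᵥ (a ⊗ₖ b).mulVec (ψ p.1.2)).re))
    (Set.Finite.bddAbove (Set.finite_range _)) ⟨(i1, i2), h12⟩
  have hsup : ‖star (ψ i1) ⬝ᵥ (a ⊗ₖ b).mulVec (ψ i2)‖ /
      Real.sqrt ((star (ψ i1) ⬝ᵥ (a ⊗ₖ b).mulVec (ψ i1)).re *
        (star (ψ i2) ⬝ᵥ (a ⊗ₖ b).mulVec (ψ i2)).re) ≤ disturbance ψ a b := hsup0
  rw [hd1, hd2, hod, e1, e2, eKX] at hsup
  have hSq : Real.sqrt (K.re * Q2.re * (K.re * Q3.re))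
      = K.re * Real.sqrt (Q2.re * Q3.re) := by
    rw [show K.re * Q2.re * (K.re * Q3.re) = K.re ^ 2 * (Q2.re * Q3.re) by ring,
      Real.sqrt_mul (sq_nonneg _), Real.sqrt_sq hKre]
  rw [hSq, mul_div_mul_left _ _ (ne_of_gt hKpos)] at hsup
  have hS : 0 < Real.sqrt (Q2.re * Q3.re) := Real.sqrt_pos.2 (mul_pos hQ2pos hQ3pos)
  have hX : ‖X‖ ≤ disturbance ψ a b * Real.sqrt (Q2.re * Q3.re) := (div_le_iff₀ hS).1 hsup
  have hd0 : 0 ≤ disturbance ψ a b :=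
    le_trans (div_nonneg (norm_nonneg _) hS.le) hsup
  have hN : Real.sqrt (Q2.re * Q3.re) ≤ N := by
    have h' : Q2.re * Q3.re ≤ N * N :=
      mul_le_mul hQ2N hQ3N hQ3pos.le (hQ2pos.le.trans hQ2N)
    calc Real.sqrt (Q2.re * Q3.re) ≤ Real.sqrt (N * N) := Real.sqrt_le_sqrt h'
      _ = N := Real.sqrt_mul_self (hQ2pos.le.trans hQ2N)
  exact hX.trans (mul_le_mul_of_nonneg_left hN hd0)

lemma core (c s : ℝ) (h1 : c^2 + s^2 = 1) (hc : 0 ≤ c) (hs : 0 ≤ s)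
    (B : Matrix (Fin 3) (Fin 3) ℂ) (hB : B.IsHermitian) (p q : Fin 3) (E : ℝ)
    (hX : ‖(-((c*s : ℝ) : ℂ) * B p p + ((c^2 : ℝ) : ℂ) * B p q - ((s^2 : ℝ):ℂ) * B q p
        + ((c*s : ℝ):ℂ) * B q q)‖ ≤ E) :
    s * c * ‖B q q - B p p‖ ≤ E + |(B p q).re| := by
  have hpp : (B p p).im = 0 := by
    have h : -(B p p).im = (B p p).im := by simpa using congrArg Complex.im (hB.apply p p)
    linarith
  have hqq : (B q q).im = 0 := by
    have h : -(B q q).im = (B q q).im := by simpa using congrArg Complex.im (hB.apply q q)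
    linarith
  have hqp : B q p = (starRingEnd ℂ) (B p q) := (hB.apply q p).symm
  set D := (B q q).re - (B p p).re with hD
  have hBD : B q q - B p p = (D : ℂ) := by
    apply Complex.ext <;> simp [hD, hpp, hqq]
  set X : ℂ := -((c*s : ℝ) : ℂ) * B p p + ((c^2 : ℝ) : ℂ) * B p q - ((s^2 : ℝ):ℂ) * B q p
        + ((c*s : ℝ):ℂ) * B q q with hXdef
  have hXre : X.re = s*c*D + (c^2 - s^2) * (B p q).re := by
    simp only [hXdef, hD, Complex.add_re, Complex.sub_re, Complex.mul_re, Complex.neg_re,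
      Complex.neg_im, Complex.ofReal_re, Complex.ofReal_im, hqp, Complex.conj_re,
      Complex.conj_im, hpp, hqq]
    ring
  have h2 : |X.re| ≤ E := by
    refine le_trans ?_ hX
    exact Complex.abs_re_le_norm X
  have h3 : |c^2 - s^2| ≤ 1 := abs_le.2 ⟨by nlinarith [sq_nonneg c], by nlinarith [sq_nonneg s]⟩
  have h4 : X.re - (c^2 - s^2) * (B p q).re = s*c*D := by rw [hXre]; ring
  have h5 : s*c*|D| = |X.re - (c^2 - s^2) * (B p q).re| := by
    rw [h4, abs_mul, abs_of_nonneg (mul_nonneg hs hc)]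
  calc s * c * ‖B q q - B p p‖ = s*c*|D| := by
        rw [hBD, Complex.norm_real, Real.norm_eq_abs]
    _ = |X.re - (c^2 - s^2) * (B p q).re| := h5
    _ ≤ |X.re| + |(c^2 - s^2) * (B p q).re| := by
        rw [sub_eq_add_neg]
        exact (abs_add_le _ _).trans (by rw [abs_neg])
    _ ≤ E + |(B p q).re| := by
        rw [abs_mul]
        nlinarith [abs_nonneg (B p q).re]

lemma finishIneq (th D T : ℝ) (h0 : 0 < th) (h4 : th ≤ Real.pi/4)
    (h : Real.sin th * Real.cos th * D ≤ T) : D ≤ 2 / Real.sin (2*th) * T := by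
  have hs : 0 < Real.sin th :=
    Real.sin_pos_of_pos_of_lt_pi h0 (lt_of_le_of_lt h4 (by linarith [Real.pi_pos]))
  have hc : 0 < Real.cos th :=
    Real.cos_pos_of_mem_Ioo ⟨by linarith [Real.pi_pos],
      lt_of_le_of_lt h4 (by linarith [Real.pi_pos])⟩
  have hsc : 0 < Real.sin th * Real.cos th := mul_pos hs hc
  rw [Real.sin_two_mul]
  have h2 : D ≤ T / (Real.sin th * Real.cos th) :=
    (le_div_iff₀ hsc).2 (by nlinarith)
  have h3 : 2 / (2 * Real.sin th * Real.cos th) * T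
      = T / (Real.sin th * Real.cos th) := by
    field_simp
  linarith [h2, h3]

/-- For the rotated domino states `S₃(θ)`, for `j ∈ {0,2}`:
`|b₁₁ − b_jj| ≤ (2/sin 2θ)·(δ·‖b‖_∞ + |Re b_{j1}|)`, and likewise for `a`. -/
theorem stmt11
    (th : ℝ) (hth : 0 < th ∧ th ≤ Real.pi / 4)
    (a b : Matrix (Fin 3) (Fin 3) ℂ) (ha : a.PosSemidef) (hb : b.PosSemidef)
    (hnz : ∀ i, star (rotDomino th th th th i) ⬝ᵥ
      (a ⊗ₖ b).mulVec (rotDomino th th th th i) ≠ 0) :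
    ∀ j : Fin 3, j = 0 ∨ j = 2 →
      ‖b 1 1 - b j j‖ ≤ (2 / Real.sin (2 * th)) *
          (disturbance (rotDomino th th th th) a b * opNorm b + |(b j 1).re|) ∧
      ‖a 1 1 - a j j‖ ≤ (2 / Real.sin (2 * th)) *
          (disturbance (rotDomino th th th th) a b * opNorm a + |(a j 1).re|) := by
  have hc := Real.cos_sq_add_sin_sq th
  set c := Real.cos th with hcdef
  set s := Real.sin th with hsdef
  set ψ := rotDomino th th th th with hψdef
  set δ := disturbance (rotDomino th th th th) a b with hδdef
  have h1 : c^2 + s^2 = 1 := hc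
  have h1' : (-s)^2 + c^2 = 1 := by linear_combination h1
  have hspos : 0 < s :=
    Real.sin_pos_of_pos_of_lt_pi hth.1 (lt_of_le_of_lt hth.2 (by linarith [Real.pi_pos]))
  have hcpos : 0 < c :=
    Real.cos_pos_of_mem_Ioo ⟨by linarith [Real.pi_pos, hth.1],
      lt_of_le_of_lt hth.2 (by linarith [Real.pi_pos])⟩
  -- the eight states as kp of rv's
  have hψ1 : ψ 1 = kp (e3 0) (rv c s 0 1) := rfl
  have hψ2 : ψ 2 = kp (e3 0) (rv (-s) c 0 1) := by
    funext k
    show kp (e3 0) (fun k => -(s : ℂ) * e3 0 k + (c : ℂ) * e3 1 k) k = _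
    simp only [kp, rv]; push_cast; ring
  have hψ3 : ψ 3 = kp (e3 2) (rv c s 1 2) := rfl
  have hψ4 : ψ 4 = kp (e3 2) (rv (-s) c 1 2) := by
    funext k
    show kp (e3 2) (fun k => -(s : ℂ) * e3 1 k + (c : ℂ) * e3 2 k) k = _
    simp only [kp, rv]; push_cast; ring
  have hψ5 : ψ 5 = kp (rv c s 1 2) (e3 0) := rfl
  have hψ6 : ψ 6 = kp (rv (-s) c 1 2) (e3 0) := by
    funext k
    show kp (fun k => -(s : ℂ) * e3 1 k + (c : ℂ) * e3 2 k) (e3 0) k = _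
    simp only [kp, rv]; push_cast; ring
  have hψ7 : ψ 7 = kp (rv c s 0 1) (e3 2) := rfl
  have hψ8 : ψ 8 = kp (rv (-s) c 0 1) (e3 2) := by
    funext k
    show kp (fun k => -(s : ℂ) * e3 0 k + (c : ℂ) * e3 1 k) (e3 2) k = _
    simp only [kp, rv]; push_cast; ring
  -- unit vectors
  have hu1 : star (rv c s 0 1) ⬝ᵥ (rv c s 0 1) = 1 := rv_unit c s h1 0 1 (by decide)
  have hu2 : star (rv (-s) c 0 1) ⬝ᵥ (rv (-s) c 0 1) = 1 := rv_unit (-s) c h1' 0 1 (by decide)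
  have hu3 : star (rv c s 1 2) ⬝ᵥ (rv c s 1 2) = 1 := rv_unit c s h1 1 2 (by decide)
  have hu4 : star (rv (-s) c 1 2) ⬝ᵥ (rv (-s) c 1 2) = 1 := rv_unit (-s) c h1' 1 2 (by decide)
  -- case b, j = 0
  have hchb0 : ‖star (rv c s 0 1) ⬝ᵥ b.mulVec (rv (-s) c 0 1)‖ ≤ δ * opNorm b := by
    refine chain ψ a b 1 2 (by decide) (star (e3 0) ⬝ᵥ a.mulVec (e3 0)) _ _ _ _
      (by rw [hψ1, kp_dot]) (by rw [hψ2, kp_dot]) (by rw [hψ1, hψ2, kp_dot])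
      (by rw [← kp_dot, ← hψ1]; exact hnz 1) (by rw [← kp_dot, ← hψ2]; exact hnz 2)
      (ha.dotProduct_mulVec_nonneg _) (hb.dotProduct_mulVec_nonneg _) (hb.dotProduct_mulVec_nonneg _)
      (le_trans (re_le_norm _) (quad_norm_le b _ hu1))
      (le_trans (re_le_norm _) (quad_norm_le b _ hu2))
  have hcoreb0 := core c s h1 hcpos.le hspos.le b hb.1 0 1 (δ * opNorm b)
    (by rw [← rot01 b c s]; exact hchb0)
  -- case b, j = 2
  have hchb2 : ‖star (rv c s 1 2) ⬝ᵥ b.mulVec (rv (-s) c 1 2)‖ ≤ δ * opNorm b := by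
    refine chain ψ a b 3 4 (by decide) (star (e3 2) ⬝ᵥ a.mulVec (e3 2)) _ _ _ _
      (by rw [hψ3, kp_dot]) (by rw [hψ4, kp_dot]) (by rw [hψ3, hψ4, kp_dot])
      (by rw [← kp_dot, ← hψ3]; exact hnz 3) (by rw [← kp_dot, ← hψ4]; exact hnz 4)
      (ha.dotProduct_mulVec_nonneg _) (hb.dotProduct_mulVec_nonneg _) (hb.dotProduct_mulVec_nonneg _)
      (le_trans (re_le_norm _) (quad_norm_le b _ hu3))
      (le_trans (re_le_norm _) (quad_norm_le b _ hu4))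
  have hcoreb2 := core c s h1 hcpos.le hspos.le b hb.1 1 2 (δ * opNorm b)
    (by rw [← rot12 b c s]; exact hchb2)
  -- case a, j = 2
  have hcha2 : ‖star (rv c s 1 2) ⬝ᵥ a.mulVec (rv (-s) c 1 2)‖ ≤ δ * opNorm a := by
    refine chain ψ a b 5 6 (by decide) (star (e3 0) ⬝ᵥ b.mulVec (e3 0)) _ _ _ _
      (by rw [hψ5, kp_dot, mul_comm]) (by rw [hψ6, kp_dot, mul_comm])
      (by rw [hψ5, hψ6, kp_dot, mul_comm])
      (by rw [mul_comm, ← kp_dot, ← hψ5]; exact hnz 5)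
      (by rw [mul_comm, ← kp_dot, ← hψ6]; exact hnz 6)
      (hb.dotProduct_mulVec_nonneg _) (ha.dotProduct_mulVec_nonneg _) (ha.dotProduct_mulVec_nonneg _)
      (le_trans (re_le_norm _) (quad_norm_le a _ hu3))
      (le_trans (re_le_norm _) (quad_norm_le a _ hu4))
  have hcorea2 := core c s h1 hcpos.le hspos.le a ha.1 1 2 (δ * opNorm a)
    (by rw [← rot12 a c s]; exact hcha2)
  -- case a, j = 0
  have hcha0 : ‖star (rv c s 0 1) ⬝ᵥ a.mulVec (rv (-s) c 0 1)‖ ≤ δ * opNorm a := by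
    refine chain ψ a b 7 8 (by decide) (star (e3 2) ⬝ᵥ b.mulVec (e3 2)) _ _ _ _
      (by rw [hψ7, kp_dot, mul_comm]) (by rw [hψ8, kp_dot, mul_comm])
      (by rw [hψ7, hψ8, kp_dot, mul_comm])
      (by rw [mul_comm, ← kp_dot, ← hψ7]; exact hnz 7)
      (by rw [mul_comm, ← kp_dot, ← hψ8]; exact hnz 8)
      (hb.dotProduct_mulVec_nonneg _) (ha.dotProduct_mulVec_nonneg _) (ha.dotProduct_mulVec_nonneg _)
      (le_trans (re_le_norm _) (quad_norm_le a _ hu1))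
      (le_trans (re_le_norm _) (quad_norm_le a _ hu2))
  have hcorea0 := core c s h1 hcpos.le hspos.le a ha.1 0 1 (δ * opNorm a)
    (by rw [← rot01 a c s]; exact hcha0)
  -- hermitian re symmetry
  have hbre : (b 2 1).re = (b 1 2).re := by
    rw [← hb.1.apply 2 1]; simp
  have hare : (a 2 1).re = (a 1 2).re := by
    rw [← ha.1.apply 2 1]; simp
  intro j hj
  rcases hj with rfl | rfl
  · constructor
    · exact finishIneq th _ _ hth.1 hth.2 hcoreb0
    · exact finishIneq th _ _ hth.1 hth.2 hcorea0
  · constructor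
    · rw [norm_sub_rev, hbre]
      exact finishIneq th _ _ hth.1 hth.2 hcoreb2
    · rw [norm_sub_rev, hare]
      exact finishIneq th _ _ hth.1 hth.2 hcorea2
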